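/- Let X be a finite type, a : Finset X → ℝ a non-negative monotone submodular set function, n ≥ 1, α ∈ (0,1], and let x₀, …, x_{n−1} be an α-approximate greedy sequence for a with partial sets B_i and output B_n. Then for every B* ⊆ X with |B*| = n, a(B_n) ≥ (1 − exp(−α))·a(B*). -/

import Mathlib

/-!
Submodularity bounds the gap `a(B*) − a(B_i)` by the sum of the marginal gains at `B_i` of the
at most `n` elements of `B*`, each of which is at most `Δ_a(x_i ∣ B_i) / α` by the greedy choice.
Hence every greedy step closes at least a fraction `α / n` of the gap, and after `n` steps the
remaining gap is at most `(1 − α / n)ⁿ · a(B*) ≤ exp(−α) · a(B*)`.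
-/

open Finset

/-- Marginal gain `Δ_a(x ∣ B) = a(B ∪ {x}) − a(B)`. -/
def margGain {X : Type*} [DecidableEq X] (a : Finset X → ℝ) (x : X) (B : Finset X) : ℝ :=
  a (insert x B) - a B

/-- The partial set `B_i = {x₀, …, x_{i−1}}` of a sequence `xs`. -/
def partialSet {X : Type*} [DecidableEq X] {n : ℕ} (xs : Fin n → X) (i : ℕ) : Finset X :=
  (Finset.univ.filter (fun j : Fin n => (j : ℕ) < i)).image xs

section SetFunction

variable {X : Type*} [DecidableEq X] {a : Finset X → ℝ}

lemma margGain_of_mem {x : X} {B : Finset X} (hx : x ∈ B) : margGain a x B = 0 := by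
  simp [margGain, insert_eq_of_mem hx]

lemma monotone_of_margGain_nonneg (ha : ∀ (B : Finset X) (x : X), 0 ≤ margGain a x B) :
    Monotone a :=
  monotone_iff_forall_le_insert.2 fun B x _ => sub_nonneg.1 (ha B x)

lemma sub_le_sum_margGain
    (ha : ∀ B' B : Finset X, B' ⊆ B → ∀ x : X, x ∉ B → margGain a x B ≤ margGain a x B')
    (B S : Finset X) : a (B ∪ S) - a B ≤ ∑ x ∈ S, margGain a x B := by
  induction S using Finset.induction_on with
  | empty => simp
  | @insert x S hxS ih =>
    rw [sum_insert hxS, union_insert]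
    have hx : a (insert x (B ∪ S)) - a (B ∪ S) ≤ margGain a x B := by
      by_cases hxB : x ∈ B
      · exact (margGain_of_mem (mem_union_left S hxB)).trans_le (margGain_of_mem hxB).ge
      · exact ha B (B ∪ S) subset_union_left x (by simp [hxB, hxS])
    linarith

lemma mul_sub_le_card_mul_margGain (hmono : Monotone a)
    (hsub : ∀ B' B : Finset X, B' ⊆ B → ∀ x : X, x ∉ B → margGain a x B ≤ margGain a x B')
    {α : ℝ} (hα : 0 ≤ α) {B : Finset X} {y : X}
    (hy : ∀ x : X, x ∉ B → α * margGain a x B ≤ margGain a y B) (S : Finset X) :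
    α * (a S - a B) ≤ #S * margGain a y B := by
  have hterm : ∀ x ∈ S, α * margGain a x B ≤ margGain a y B := fun x _ => by
    by_cases hxB : x ∈ B
    · rw [margGain_of_mem hxB, mul_zero]
      exact sub_nonneg.2 (hmono (subset_insert y B))
    · exact hy x hxB
  calc α * (a S - a B) ≤ α * (a (B ∪ S) - a B) := by
        gcongr
        exact hmono subset_union_right
    _ ≤ α * ∑ x ∈ S, margGain a x B := by
        gcongr
        exact sub_le_sum_margGain hsub B S
    _ = ∑ x ∈ S, α * margGain a x B := mul_sum S _ α
    _ ≤ ∑ _x ∈ S, margGain a y B := sum_le_sum hterm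
    _ = #S * margGain a y B := by simp

end SetFunction

lemma sub_le_exp_neg_mul_sub_of_gain {g : ℕ → ℝ} {v α : ℝ} {n : ℕ} (hα : α ≤ n)
    (h0 : g 0 ≤ v) (hstep : ∀ i < n, α * (v - g i) ≤ n * (g (i + 1) - g i)) :
    v - g n ≤ Real.exp (-α) * (v - g 0) := by
  have hr : 0 ≤ 1 - α / n := sub_nonneg.2 (div_le_one_of_le₀ hα n.cast_nonneg)
  have hpow : ∀ i ≤ n, v - g i ≤ (1 - α / n) ^ i * (v - g 0) := by
    intro i hi
    induction i with
    | zero => simp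
    | succ i ih =>
      have hpos : (0 : ℝ) < n := by exact_mod_cast (Nat.zero_lt_of_lt hi)
      have hgain : α / n * (v - g i) ≤ g (i + 1) - g i := by
        rw [div_mul_eq_mul_div, div_le_iff₀' hpos]
        exact hstep i hi
      calc v - g (i + 1) ≤ (1 - α / n) * (v - g i) := by linarith
        _ ≤ (1 - α / n) * ((1 - α / n) ^ i * (v - g 0)) :=
          mul_le_mul_of_nonneg_left (ih (Nat.le_of_succ_le hi)) hr
        _ = (1 - α / n) ^ (i + 1) * (v - g 0) := by ring
  calc v - g n ≤ (1 - α / n) ^ n * (v - g 0) := hpow n le_rfl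
    _ ≤ Real.exp (-α) * (v - g 0) :=
      mul_le_mul_of_nonneg_right (Real.one_sub_div_pow_le_exp_neg hα) (sub_nonneg.2 h0)

section PartialSet

variable {X : Type*} [DecidableEq X] {n : ℕ} (xs : Fin n → X)

lemma partialSet_zero : partialSet xs 0 = ∅ := by
  simp [partialSet]

lemma partialSet_succ {i : ℕ} (hi : i < n) :
    partialSet xs (i + 1) = insert (xs ⟨i, hi⟩) (partialSet xs i) := by
  ext y
  simp only [partialSet, mem_image, mem_filter, mem_univ, true_and, mem_insert,
    Nat.lt_succ_iff_lt_or_eq, or_and_right, exists_or]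
  refine or_comm.trans (or_congr_left ⟨?_, ?_⟩)
  · rintro ⟨j, hj, rfl⟩
    exact congrArg xs (Fin.ext hj)
  · rintro rfl
    exact ⟨⟨i, hi⟩, rfl, rfl⟩

end PartialSet

theorem approx_greedy_submodular_bound_general {X : Type*} [DecidableEq X]
    (a : Finset X → ℝ)
    (ha_nonneg : ∀ B : Finset X, 0 ≤ a B)
    (ha_mono : ∀ (B : Finset X) (x : X), 0 ≤ margGain a x B)
    (ha_submod : ∀ B' B : Finset X, B' ⊆ B → ∀ x : X, x ∉ B →
      margGain a x B ≤ margGain a x B')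
    (n : ℕ) (hn : 1 ≤ n)
    (α : ℝ) (hα0 : 0 < α) (hα1 : α ≤ 1)
    (xs : Fin n → X)
    (hgreedy : ∀ i : Fin n, ∀ x : X, x ∉ partialSet xs i →
      α * margGain a x (partialSet xs i) ≤ margGain a (xs i) (partialSet xs i))
    (Bstar : Finset X) (hBstar : Bstar.card = n) :
    (1 - Real.exp (-α)) * a Bstar ≤ a (partialSet xs n) := by
  have hmono : Monotone a := monotone_of_margGain_nonneg ha_mono
  have hstep : ∀ i < n, α * (a Bstar - a (partialSet xs i)) ≤
      n * (a (partialSet xs (i + 1)) - a (partialSet xs i)) := fun i hi => by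
    have h := mul_sub_le_card_mul_margGain hmono ha_submod hα0.le (hgreedy ⟨i, hi⟩) Bstar
    rwa [hBstar, margGain, ← partialSet_succ xs hi] at h
  have hgap := sub_le_exp_neg_mul_sub_of_gain (g := fun i => a (partialSet xs i))
    (hα1.trans (by exact_mod_cast hn)) (hmono (by simp [partialSet_zero])) hstep
  simp only [partialSet_zero] at hgap
  have hempty : Real.exp (-α) * (a Bstar - a ∅) ≤ Real.exp (-α) * a Bstar :=
    mul_le_mul_of_nonneg_left (sub_le_self _ (ha_nonneg ∅)) (Real.exp_pos _).le
  linarith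

/-- approximation guarantee of the α-approximate greedy algorithm
for a non-negative monotone submodular set function:
`a(B_n) ≥ (1 − exp(−α))·a(B*)` for every `n`-subset `B*`. -/
theorem approx_greedy_submodular_bound {X : Type*} [Fintype X] [DecidableEq X]
    (a : Finset X → ℝ)
    (ha_nonneg : ∀ B : Finset X, 0 ≤ a B)
    (ha_mono : ∀ (B : Finset X) (x : X), 0 ≤ margGain a x B)
    (ha_submod : ∀ B' B : Finset X, B' ⊆ B → ∀ x : X, x ∉ B →
      margGain a x B ≤ margGain a x B')
    (n : ℕ) (hn : 1 ≤ n)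
    (α : ℝ) (hα0 : 0 < α) (hα1 : α ≤ 1)
    (xs : Fin n → X)
    (hgreedy : ∀ i : Fin n, ∀ x : X, x ∉ partialSet xs i →
      α * margGain a x (partialSet xs i) ≤ margGain a (xs i) (partialSet xs i))
    (Bstar : Finset X) (hBstar : Bstar.card = n) :
    (1 - Real.exp (-α)) * a Bstar ≤ a (partialSet xs n) :=
  approx_greedy_submodular_bound_general a ha_nonneg ha_mono ha_submod n hn α hα0 hα1 xs hgreedy
    Bstar hBstar
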